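/- If there is a strictly decreasing palindromic sequence (with respect to k and ℓ) of length d of integers in {1,…,k^ℓ−1} (all terms nonzero), then there is a strictly decreasing palindromic sequence (with respect to k and ℓ+2) of length kd+k−1 of integers in {1,…,k^{ℓ+2}−1} (all terms nonzero). -/

import Mathlib

/-- `digitRev k ℓ n` : the radix-`k` digit reversal of `n`, viewed as a string of exactly
`ℓ` base-`k` digits (padded with leading zeros). -/
def digitRev (k : ℕ) : ℕ → ℕ → ℕ
  | 0, _ => 0
  | ℓ + 1, n => n % k * k ^ ℓ + digitRev k ℓ (n / k)

/-- A sequence of numbers in `{0,…,k^ℓ-1}` is palindromic (w.r.t. `k`, `ℓ`) if the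
`ℓ`-digit base-`k` string of the `i`-th term from the start is the reversal of that
of the `i`-th term from the end. -/
def Palindromic (k ℓ d : ℕ) (b : Fin d → ℕ) : Prop :=
  ∀ i : Fin d, digitRev k ℓ (b i) = b i.rev

/-!
Write the new terms with `ℓ + 2` base-`k` digits: an outer digit on each side of an `ℓ`-digit
middle. For `t < k`, block `t` lists the terms with leading digit `k - 1 - t`, middle `b r` and
trailing digit `t` for `r = 0, …, d - 1`, followed (except after the last block) by a separator
with leading digit `k - 1 - t`, middle `0` and trailing digit `t + 1`; that makes `k (d + 1) - 1`
terms. Digit reversal swaps the outer digits and reverses the middle, so it sends slot `r` of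
block `t` to slot `d - 1 - r` of block `k - 1 - t`, and the separator of block `t` to that of
block `k - 2 - t`: exactly the mirror positions. The sequence decreases because the leading digit
drops from block to block, and within a block the middles decrease and the separator comes last,
as `b r ≥ 1` gives `b r * k + t ≥ k + t > t + 1`.
-/

lemma digitRev_zero_right (k : ℕ) : ∀ ℓ, digitRev k ℓ 0 = 0
  | 0 => rfl
  | ℓ + 1 => by simp [digitRev, digitRev_zero_right k ℓ]

lemma digitRev_succ_mul_add {k c : ℕ} (hc : c < k) (ℓ m : ℕ) :
    digitRev k (ℓ + 1) (m * k + c) = c * k ^ ℓ + digitRev k ℓ m := by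
  have hk : 0 < k := by omega
  rw [digitRev, Nat.mul_add_mod_self_right, Nat.mod_eq_of_lt hc, mul_comm m k,
    Nat.mul_add_div hk, Nat.div_eq_of_lt hc, add_zero]

lemma digitRev_succ_mul_pow_add {k c : ℕ} (hc : c < k) :
    ∀ {ℓ m : ℕ}, m < k ^ ℓ → digitRev k (ℓ + 1) (c * k ^ ℓ + m) = digitRev k ℓ m * k + c
  | 0, m, hm => by
    obtain rfl : m = 0 := by simpa using hm
    simp [digitRev, Nat.mod_eq_of_lt hc]
  | ℓ + 1, m, hm => by
    have hk : 0 < k := by omega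
    have hdiv : m / k < k ^ ℓ := Nat.div_lt_of_lt_mul (by rwa [mul_comm, ← pow_succ])
    have hsplit : c * k ^ (ℓ + 1) + m = (c * k ^ ℓ + m / k) * k + m % k := by
      rw [add_mul, mul_assoc, ← pow_succ, add_assoc, Nat.div_add_mod']
    rw [hsplit, digitRev_succ_mul_add (Nat.mod_lt m hk), digitRev_succ_mul_pow_add hc hdiv,
      digitRev]
    ring

lemma digitRev_outer {k a c m ℓ : ℕ} (ha : a < k) (hc : c < k) (hm : m < k ^ ℓ) :
    digitRev k (ℓ + 2) (a * k ^ (ℓ + 1) + (m * k + c)) =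
      c * k ^ (ℓ + 1) + (digitRev k ℓ m * k + a) := by
  have hmc : m * k + c < k ^ (ℓ + 1) := by
    rw [pow_succ]
    nlinarith
  rw [digitRev_succ_mul_pow_add ha hmc, digitRev_succ_mul_add hc]
  ring

lemma mul_add_lt_mul_add {K a a' w w' : ℕ} (ha : a' < a) (hw' : w' < K) :
    a' * K + w' < a * K + w :=
  calc a' * K + w' < (a' + 1) * K := by rw [add_one_mul]; omega
    _ ≤ a * K := Nat.mul_le_mul_right K ha
    _ ≤ a * K + w := Nat.le_add_right _ _

def blockTail (k : ℕ) {d : ℕ} (b : Fin d → ℕ) (t r : ℕ) : ℕ :=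
  if h : r < d then b ⟨r, h⟩ * k + t else t + 1

def blockTerm (k ℓ : ℕ) {d : ℕ} (b : Fin d → ℕ) (t r : ℕ) : ℕ :=
  (k - 1 - t) * k ^ (ℓ + 1) + blockTail k b t r

def extendSeq (k ℓ : ℕ) {d : ℕ} (b : Fin d → ℕ) (n : ℕ) : ℕ :=
  blockTerm k ℓ b (n / (d + 1)) (n % (d + 1))

section Extension

variable {k ℓ d : ℕ} {b : Fin d → ℕ} {t r : ℕ}

lemma blockTail_of_lt (h : r < d) : blockTail k b t r = b ⟨r, h⟩ * k + t :=
  dif_pos h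

lemma blockTail_of_le (h : d ≤ r) : blockTail k b t r = t + 1 :=
  dif_neg (Nat.not_lt.2 h)

lemma blockTail_pos (hk : 0 < k) (hb : ∀ i, 1 ≤ b i) : 0 < blockTail k b t r := by
  by_cases h : r < d
  · rw [blockTail_of_lt h]
    have := Nat.mul_le_mul_right k (hb ⟨r, h⟩)
    omega
  · rw [blockTail_of_le (by omega)]
    omega

lemma blockTail_lt (hb : ∀ i, b i < k ^ ℓ) (ht : t < k) (hsep : d ≤ r → t + 1 < k) :
    blockTail k b t r < k ^ (ℓ + 1) := by
  by_cases h : r < d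
  · rw [blockTail_of_lt h, pow_succ]
    have := Nat.mul_le_mul_right k (hb ⟨r, h⟩)
    rw [Nat.succ_mul] at this
    omega
  · rw [blockTail_of_le (by omega)]
    exact (hsep (by omega)).trans_le (Nat.le_self_pow (by omega) k)

lemma blockTail_lt_blockTail (hk : 2 ≤ k) (hb : ∀ i, 1 ≤ b i) (hdec : StrictAnti b) {r' : ℕ}
    (hrr' : r < r') (hr' : r' ≤ d) : blockTail k b t r' < blockTail k b t r := by
  have hr : r < d := by omega
  rw [blockTail_of_lt hr]
  rcases hr'.lt_or_eq with hr' | rfl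
  · rw [blockTail_of_lt hr']
    have := Nat.mul_lt_mul_of_pos_right (hdec (show (⟨r, hr⟩ : Fin d) < ⟨r', hr'⟩ from hrr'))
      (by omega : 0 < k)
    omega
  · rw [blockTail_of_le le_rfl]
    have := Nat.mul_le_mul_right k (hb ⟨r, hr⟩)
    omega

lemma digitRev_blockTerm_of_lt (hb : ∀ i, b i < k ^ ℓ) (hpal : Palindromic k ℓ d b) (ht : t < k)
    (hr : r < d) :
    digitRev k (ℓ + 2) (blockTerm k ℓ b t r) = blockTerm k ℓ b (k - 1 - t) (d - 1 - r) := by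
  have hrev : (⟨r, hr⟩ : Fin d).rev = ⟨d - 1 - r, by omega⟩ := Fin.ext (by simp; omega)
  rw [blockTerm, blockTail_of_lt hr, digitRev_outer (by omega) ht (hb _), hpal, hrev, blockTerm,
    blockTail_of_lt, Nat.sub_sub_self (by omega)]

lemma digitRev_blockTerm_self (ht : t + 1 < k) :
    digitRev k (ℓ + 2) (blockTerm k ℓ b t d) = blockTerm k ℓ b (k - 2 - t) d := by
  have hsep : blockTerm k ℓ b t d = (k - 1 - t) * k ^ (ℓ + 1) + (0 * k + (t + 1)) := by
    rw [blockTerm, blockTail_of_le le_rfl, zero_mul, zero_add]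
  rw [hsep, digitRev_outer (by omega) ht (pow_pos (by omega) ℓ), digitRev_zero_right, blockTerm,
    blockTail_of_le le_rfl, show k - 1 - (k - 2 - t) = t + 1 by omega,
    show k - 2 - t + 1 = k - 1 - t by omega, zero_mul, zero_add]

lemma exists_block_slot (d n : ℕ) : ∃ t r, r < d + 1 ∧ n = t * (d + 1) + r :=
  ⟨n / (d + 1), n % (d + 1), Nat.mod_lt _ d.succ_pos, (Nat.div_add_mod' n (d + 1)).symm⟩

lemma extendSeq_mul_add (hr : r < d + 1) :
    extendSeq k ℓ b (t * (d + 1) + r) = blockTerm k ℓ b t r := by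
  obtain ⟨hdiv, hmod⟩ := (Nat.div_mod_unique d.succ_pos).2
    ⟨(by ring : r + (d + 1) * t = t * (d + 1) + r), hr⟩
  rw [extendSeq, hdiv, hmod]

lemma block_lt_of_lt_len (hn : t * (d + 1) + r < k * d + k - 1) : t < k := by
  by_contra! h
  have := Nat.mul_le_mul_right (d + 1) h
  rw [mul_add_one] at this
  omega

lemma succ_block_lt_of_lt_len (hn : t * (d + 1) + d < k * d + k - 1) : t + 1 < k := by
  by_contra! h
  have := Nat.mul_le_mul_right (d + 1) h
  rw [mul_add_one, add_one_mul] at this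
  omega

lemma len_sub_block_slot (ht : t < k) (hr : r < d) :
    k * d + k - 1 - (t * (d + 1) + r + 1) = (k - 1 - t) * (d + 1) + (d - 1 - r) := by
  obtain ⟨s, rfl⟩ : ∃ s, k = t + s + 1 := ⟨k - 1 - t, by omega⟩
  obtain ⟨u, rfl⟩ : ∃ u, d = r + u + 1 := ⟨d - 1 - r, by omega⟩
  rw [show t + s + 1 - 1 - t = s by omega, show r + u + 1 - 1 - r = u by omega]
  apply Nat.sub_eq_of_eq_add
  ring_nf
  omega

lemma len_sub_block_separator (ht : t + 1 < k) :
    k * d + k - 1 - (t * (d + 1) + d + 1) = (k - 2 - t) * (d + 1) + d := by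
  obtain ⟨s, rfl⟩ : ∃ s, k = t + s + 2 := ⟨k - 2 - t, by omega⟩
  rw [show t + s + 2 - 2 - t = s by omega]
  apply Nat.sub_eq_of_eq_add
  ring_nf
  omega

variable {n : ℕ}

lemma extendSeq_pos (hk : 0 < k) (hb : ∀ i, 1 ≤ b i) : 0 < extendSeq k ℓ b n :=
  Nat.add_pos_right _ (blockTail_pos hk hb)

lemma extendSeq_lt (hb : ∀ i, b i < k ^ ℓ) (hn : n < k * d + k - 1) :
    extendSeq k ℓ b n < k ^ (ℓ + 2) := by
  obtain ⟨t, r, hr, rfl⟩ := exists_block_slot d n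
  have ht := block_lt_of_lt_len hn
  have hsep : d ≤ r → t + 1 < k := fun h ↦ succ_block_lt_of_lt_len (d := d) (by omega)
  rw [extendSeq_mul_add hr, blockTerm, pow_succ _ (ℓ + 1), mul_comm _ k]
  calc (k - 1 - t) * k ^ (ℓ + 1) + blockTail k b t r
      < (k - 1 - t) * k ^ (ℓ + 1) + k ^ (ℓ + 1) := by gcongr; exact blockTail_lt hb ht hsep
    _ = (k - t) * k ^ (ℓ + 1) := by rw [← add_one_mul, show k - 1 - t + 1 = k - t by omega]
    _ ≤ k * k ^ (ℓ + 1) := by gcongr; omega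

lemma digitRev_extendSeq (hb : ∀ i, b i < k ^ ℓ) (hpal : Palindromic k ℓ d b)
    (hn : n < k * d + k - 1) :
    digitRev k (ℓ + 2) (extendSeq k ℓ b n) = extendSeq k ℓ b (k * d + k - 1 - (n + 1)) := by
  obtain ⟨t, r, hr, rfl⟩ := exists_block_slot d n
  have ht := block_lt_of_lt_len hn
  rw [extendSeq_mul_add hr]
  rcases Nat.lt_succ_iff_lt_or_eq.1 hr with hr | rfl
  · rw [digitRev_blockTerm_of_lt hb hpal ht hr, len_sub_block_slot ht hr,
      extendSeq_mul_add (by omega)]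
  · have ht := succ_block_lt_of_lt_len hn
    rw [digitRev_blockTerm_self ht, len_sub_block_separator ht,
      extendSeq_mul_add (by omega)]

lemma extendSeq_lt_extendSeq (hk : 2 ≤ k) (hb : ∀ i, 1 ≤ b i ∧ b i < k ^ ℓ) (hdec : StrictAnti b)
    {m : ℕ} (hmn : m < n) (hn : n < k * d + k - 1) : extendSeq k ℓ b n < extendSeq k ℓ b m := by
  obtain ⟨t, r, hr, rfl⟩ := exists_block_slot d m
  obtain ⟨t', r', hr', rfl⟩ := exists_block_slot d n
  rw [extendSeq_mul_add hr, extendSeq_mul_add hr', blockTerm, blockTerm]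
  rcases lt_trichotomy t t' with htt' | rfl | htt'
  · have ht' := block_lt_of_lt_len hn
    refine mul_add_lt_mul_add (by omega) (blockTail_lt (fun i ↦ (hb i).2) ht' fun h ↦ ?_)
    exact succ_block_lt_of_lt_len (d := d) (by omega)
  · exact Nat.add_lt_add_left (blockTail_lt_blockTail hk (fun i ↦ (hb i).1) hdec (by omega)
      (by omega)) _
  · have := Nat.mul_le_mul_right (d + 1) htt'
    rw [Nat.succ_mul] at this
    omega

end Extension

theorem stmt10 (k ℓ d : ℕ) (hk : 2 ≤ k)
    (b : Fin d → ℕ) (hb : ∀ i, 1 ≤ b i ∧ b i < k ^ ℓ)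
    (hpal : Palindromic k ℓ d b) (hdec : StrictAnti b) :
    ∃ b' : Fin (k * d + k - 1) → ℕ,
      (∀ i, 1 ≤ b' i ∧ b' i < k ^ (ℓ + 2)) ∧
      Palindromic k (ℓ + 2) (k * d + k - 1) b' ∧ StrictAnti b' := by
  refine ⟨fun j ↦ extendSeq k ℓ b j, fun j ↦ ⟨?_, ?_⟩, fun j ↦ ?_, fun i j hij ↦ ?_⟩
  · exact extendSeq_pos (by omega) fun i ↦ (hb i).1
  · exact extendSeq_lt (fun i ↦ (hb i).2) j.isLt
  · dsimp only
    rw [Fin.val_rev]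
    exact digitRev_extendSeq (fun i ↦ (hb i).2) hpal j.isLt
  · exact extendSeq_lt_extendSeq hk hb hdec hij j.isLt
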